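/- arXiv:2505.02065 — 2 statements merged into one kernel-verified Lean document; each statement's English description precedes it below -/
import Mathlib

section
/- Let H and K be real Hilbert spaces and let ι : H → K be a compact continuous linear map. Let X ⊆ H be a closed linear subspace such that the set M = {u ∈ X : ‖ι u‖_K = 1} is nonempty. Then there exists u* ∈ M such that ‖u*‖_H = inf{‖u‖_H : u ∈ M}, and moreover ⟨u*, φ⟩_H = ‖u*‖_H² · ⟨ι u*, ι φ⟩_K for every φ ∈ X. -/
/-!
Let `m` be the infimum of `‖u‖` over `u ∈ X` with `‖ι u‖ = 1`. By homogeneity the quadratic form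
`Q v = ‖v‖² - m² ‖ι v‖²` is nonnegative on `X`. Along a minimizing sequence `Q (u n) → 0`, and
compactness of `ι` makes `ι (u n)` converge along a subsequence; the parallelogram law, applied
to `Q` and to `ι`, bounds `‖u n - u k‖²` by `2 Q (u n) + 2 Q (u k) + m² ‖ι u n - ι u k‖²`, so that
subsequence is Cauchy and its limit is a minimizer. At a minimizer `u*` the form `Q` vanishes, so
the nonnegative quadratic polynomial `t ↦ Q (u* + t φ)` has a double root at `0`: its linear
coefficient, which is the Euler–Lagrange equation, vanishes.
-/

open Filter Topology

lemma exists_seq_tendsto_sInf_norm {E : Type*} [SeminormedAddCommGroup E] {S : Set E}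
    (hS : S.Nonempty) :
    ∃ u : ℕ → E, (∀ n, u n ∈ S) ∧ Tendsto (fun n ↦ ‖u n‖) atTop (𝓝 (sInf (norm '' S))) := by
  obtain ⟨r, -, hr, hrS⟩ := exists_seq_tendsto_sInf (hS.image norm)
    ⟨0, by rintro _ ⟨u, -, rfl⟩; exact norm_nonneg u⟩
  choose u huS hu using hrS
  exact ⟨u, huS, by simpa only [hu] using hr⟩

lemma sq_mul_sq_norm_apply_le_sq_norm {E F : Type*} [SeminormedAddCommGroup E]
    [NormedSpace ℝ E] [NormedAddCommGroup F] [NormedSpace ℝ F] {f : E →ₗ[ℝ] F}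
    {X : Submodule ℝ E} {m : ℝ} (hm : 0 ≤ m)
    (h : ∀ u ∈ X, ‖f u‖ = 1 → m ≤ ‖u‖) {v : E} (hv : v ∈ X) :
    m ^ 2 * ‖f v‖ ^ 2 ≤ ‖v‖ ^ 2 := by
  rw [← mul_pow]
  refine pow_le_pow_left₀ (by positivity) ?_ 2
  rcases eq_or_ne (f v) 0 with h0 | h0
  · simp [h0]
  have hpos : 0 < ‖f v‖ := norm_pos_iff.2 h0
  have hscaled := h (‖f v‖⁻¹ • v) (X.smul_mem _ hv) (by
    rw [map_smul, norm_smul, norm_inv, norm_norm, inv_mul_cancel₀ hpos.ne'])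
  rw [norm_smul, norm_inv, norm_norm, le_inv_mul_iff₀ hpos] at hscaled
  linarith

theorem IsCompactOperator.exists_tendsto_comp_subseq {𝕜 E F : Type*} [NontriviallyNormedField 𝕜]
    [SeminormedAddCommGroup E] [NormedSpace 𝕜 E] [SeminormedAddCommGroup F] [NormedSpace 𝕜 F]
    {f : E →L[𝕜] F} (hf : IsCompactOperator f) {u : ℕ → E}
    (hu : Bornology.IsBounded (Set.range u)) :
    ∃ w : F, ∃ ψ : ℕ → ℕ, StrictMono ψ ∧ Tendsto (f ∘ u ∘ ψ) atTop (𝓝 w) := by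
  obtain ⟨C, hC, hfu⟩ := hf.image_subset_compact_of_bounded (f := (f : E →ₗ[𝕜] F)) hu
  obtain ⟨w, -, ψ, hψ, hw⟩ := hC.tendsto_subseq fun n ↦ hfu ⟨u n, ⟨n, rfl⟩, rfl⟩
  exact ⟨w, ψ, hψ, hw⟩

section Quadratic

variable {H K : Type*} [NormedAddCommGroup H] [InnerProductSpace ℝ H]
  [NormedAddCommGroup K] [InnerProductSpace ℝ K] {ι : H →ₗ[ℝ] K} {X : Submodule ℝ H} {c : ℝ}

lemma sq_norm_sub_le (hQ : ∀ v ∈ X, c * ‖ι v‖ ^ 2 ≤ ‖v‖ ^ 2) {v w : H} (hv : v ∈ X)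
    (hw : w ∈ X) :
    ‖v - w‖ ^ 2 ≤ 2 * (‖v‖ ^ 2 - c * ‖ι v‖ ^ 2) + 2 * (‖w‖ ^ 2 - c * ‖ι w‖ ^ 2)
      + c * ‖ι v - ι w‖ ^ 2 := by
  have hH := parallelogram_law_with_norm ℝ v w
  have hK := parallelogram_law_with_norm ℝ (ι v) (ι w)
  have hsum := hQ (v + w) (X.add_mem hv hw)
  rw [map_add] at hsum
  linear_combination hsum + hH - c * hK

lemma cauchySeq_of_cauchySeq_comp (hQ : ∀ v ∈ X, c * ‖ι v‖ ^ 2 ≤ ‖v‖ ^ 2) {u : ℕ → H}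
    (hu : ∀ n, u n ∈ X) (hQu : Tendsto (fun n ↦ ‖u n‖ ^ 2 - c * ‖ι (u n)‖ ^ 2) atTop (𝓝 0))
    (hιu : CauchySeq (ι ∘ u)) : CauchySeq u := by
  rw [cauchySeq_iff_tendsto_dist_atTop_0] at hιu ⊢
  rw [← prod_atTop_atTop_eq] at hιu ⊢
  have hbound : Tendsto (fun p : ℕ × ℕ ↦ 2 * (‖u p.1‖ ^ 2 - c * ‖ι (u p.1)‖ ^ 2)
      + 2 * (‖u p.2‖ ^ 2 - c * ‖ι (u p.2)‖ ^ 2) + c * dist (ι (u p.1)) (ι (u p.2)) ^ 2)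
      (atTop ×ˢ atTop) (𝓝 0) := by
    simpa using (((hQu.comp tendsto_fst).const_mul 2).add
      ((hQu.comp tendsto_snd).const_mul 2)).add ((hιu.pow 2).const_mul c)
  have hsq : Tendsto (fun p : ℕ × ℕ ↦ dist (u p.1) (u p.2) ^ 2) (atTop ×ˢ atTop) (𝓝 0) :=
    squeeze_zero (fun _ ↦ by positivity)
      (fun p ↦ by simpa only [dist_eq_norm] using sq_norm_sub_le hQ (hu p.1) (hu p.2)) hbound
  simpa [Real.sqrt_sq dist_nonneg] using hsq.sqrt

lemma inner_eq_mul_inner_of_sq_norm_eq (hQ : ∀ v ∈ X, c * ‖ι v‖ ^ 2 ≤ ‖v‖ ^ 2) {u φ : H}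
    (hu : u ∈ X) (hu0 : ‖u‖ ^ 2 = c * ‖ι u‖ ^ 2) (hφ : φ ∈ X) :
    inner ℝ u φ = c * inner ℝ (ι u) (ι φ) := by
  have hquad : ∀ t : ℝ, 0 ≤ (‖φ‖ ^ 2 - c * ‖ι φ‖ ^ 2) * (t * t)
      + 2 * (inner ℝ u φ - c * inner ℝ (ι u) (ι φ)) * t + 0 := by
    intro t
    have ht := hQ (u + t • φ) (X.add_mem hu (X.smul_mem t hφ))
    rw [map_add, map_smul, norm_add_sq_real, norm_add_sq_real, norm_smul, norm_smul,
      inner_smul_right, inner_smul_right, Real.norm_eq_abs, mul_pow, mul_pow, sq_abs] at ht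
    nlinarith
  have hdiscr := discrim_le_zero hquad
  rw [discrim] at hdiscr
  nlinarith

end Quadratic

theorem IsCompactOperator.exists_norm_le_of_norm_apply_eq_one {H K : Type*}
    [NormedAddCommGroup H] [InnerProductSpace ℝ H] [CompleteSpace H]
    [NormedAddCommGroup K] [InnerProductSpace ℝ K]
    {ι : H →L[ℝ] K} (hι : IsCompactOperator ι) {X : Submodule ℝ H} (hX : IsClosed (X : Set H))
    (hM : ∃ u ∈ X, ‖ι u‖ = 1) :
    ∃ u ∈ X, ‖ι u‖ = 1 ∧ ∀ v ∈ X, ‖ι v‖ = 1 → ‖u‖ ≤ ‖v‖ := by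
  set M := {u | u ∈ X ∧ ‖ι u‖ = 1}
  set m := sInf (norm '' M)
  have hm : ∀ v ∈ X, ‖ι v‖ = 1 → m ≤ ‖v‖ := fun v hv h1 ↦
    csInf_le ⟨0, by rintro _ ⟨u, -, rfl⟩; exact norm_nonneg u⟩ ⟨v, ⟨hv, h1⟩, rfl⟩
  have hm0 : 0 ≤ m := Real.sInf_nonneg (by rintro _ ⟨u, -, rfl⟩; exact norm_nonneg u)
  obtain ⟨u, huM, hu⟩ := exists_seq_tendsto_sInf_norm (S := M) hM
  obtain ⟨C, hC⟩ := hu.bddAbove_range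
  obtain ⟨w, ψ, hψ, hw⟩ := hι.exists_tendsto_comp_subseq
    (isBounded_iff_forall_norm_le.2 ⟨C, by rintro _ ⟨n, rfl⟩; exact hC ⟨n, rfl⟩⟩)
  have hQu : Tendsto (fun n ↦ ‖u (ψ n)‖ ^ 2 - m ^ 2 * ‖ι (u (ψ n))‖ ^ 2) atTop (𝓝 0) := by
    simp only [(huM _).2, one_pow, mul_one]
    exact tendsto_sub_nhds_zero_iff.2 ((hu.comp hψ.tendsto_atTop).pow 2)
  obtain ⟨ustar, hlim⟩ := cauchySeq_tendsto_of_complete <|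
    cauchySeq_of_cauchySeq_comp (ι := (ι : H →ₗ[ℝ] K))
      (fun v hv ↦ sq_mul_sq_norm_apply_le_sq_norm hm0 hm hv) (fun n ↦ (huM _).1) hQu hw.cauchySeq
  have hnorm : ‖ustar‖ = m := tendsto_nhds_unique hlim.norm (hu.comp hψ.tendsto_atTop)
  refine ⟨ustar, hX.mem_of_tendsto hlim (.of_forall fun n ↦ (huM _).1), ?_, hnorm ▸ hm⟩
  exact tendsto_nhds_unique ((ι.continuous.tendsto _).comp hlim).norm (by simp [(huM _).2])

theorem stmt_10_general {H K : Type*}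
    [NormedAddCommGroup H] [InnerProductSpace ℝ H] [CompleteSpace H]
    [NormedAddCommGroup K] [InnerProductSpace ℝ K]
    (ι : H →L[ℝ] K) (hcompact : IsCompactOperator ι)
    (X : Submodule ℝ H) (hX : IsClosed (X : Set H))
    (hM : ∃ u ∈ X, ‖ι u‖ = 1) :
    ∃ ustar : H, ustar ∈ X ∧ ‖ι ustar‖ = 1 ∧
      (∀ u ∈ X, ‖ι u‖ = 1 → ‖ustar‖ ≤ ‖u‖) ∧
      ∀ φ ∈ X, (inner ℝ ustar φ : ℝ) = ‖ustar‖ ^ 2 * (inner ℝ (ι ustar) (ι φ) : ℝ) := by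
  obtain ⟨u, hu, hu1, hmin⟩ := hcompact.exists_norm_le_of_norm_apply_eq_one hX hM
  have hQ : ∀ v ∈ X, ‖u‖ ^ 2 * ‖ι v‖ ^ 2 ≤ ‖v‖ ^ 2 := fun v hv ↦
    sq_mul_sq_norm_apply_le_sq_norm (f := (ι : H →ₗ[ℝ] K)) (norm_nonneg u) hmin hv
  exact ⟨u, hu, hu1, hmin, fun φ hφ ↦
    inner_eq_mul_inner_of_sq_norm_eq (ι := (ι : H →ₗ[ℝ] K)) hQ hu (by simp [hu1]) hφ⟩

/-- constrained minimization (Claim A.1(a), abstract form): if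
`ι : H → K` is a compact continuous linear map between real Hilbert spaces and
`X ⊆ H` is a closed subspace such that `M = {u ∈ X : ‖ι u‖ = 1}` is nonempty, then
the `H`-norm attains its minimum on `M` at some `u*`, and `u*` is a weak
eigenfunction: `⟪u*, φ⟫_H = ‖u*‖² ⟪ι u*, ι φ⟫_K` for all `φ ∈ X`. -/
theorem stmt_10 {H K : Type*}
    [NormedAddCommGroup H] [InnerProductSpace ℝ H] [CompleteSpace H]
    [NormedAddCommGroup K] [InnerProductSpace ℝ K] [CompleteSpace K]
    (ι : H →L[ℝ] K) (hcompact : IsCompactOperator ι)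
    (X : Submodule ℝ H) (hX : IsClosed (X : Set H))
    (hM : ∃ u ∈ X, ‖ι u‖ = 1) :
    ∃ ustar : H, ustar ∈ X ∧ ‖ι ustar‖ = 1 ∧
      (∀ u ∈ X, ‖ι u‖ = 1 → ‖ustar‖ ≤ ‖u‖) ∧
      ∀ φ ∈ X, (inner ℝ ustar φ : ℝ) = ‖ustar‖ ^ 2 * (inner ℝ (ι ustar) (ι φ) : ℝ) :=
  stmt_10_general ι hcompact X hX hM
end

section
/- Let H be a real Hilbert space with an orthonormal Hilbert basis (e_k)_{k∈ℕ}, let E be a real normed space, and let ι : H → E be a compact continuous linear map. For each k ∈ ℕ let Z_k denote the closed linear span of {e_j : j ≥ k} and set β_k = sup{‖ι u‖_E : u ∈ Z_k, ‖u‖_H = 1}. Then β_k → 0 as k → ∞. -/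
/-!
A unit vector of `Z_n` is orthogonal to `e_0, …, e_{n-1}`, so
`⟪v, u⟫ = ⟪v - ∑_{j<n} ⟪e_j, v⟫ e_j, u⟫`; since the partial sums converge to `v`, bounded sequences
`u_n ∈ Z_n` converge weakly to `0`. A compact operator turns such a sequence into a norm-null one:
every subsequence of `ι u_n` has a convergent further subsequence, and its limit is annihilated by
every functional `f`, because `f ∘ ι` is represented by a vector of `H`. Picking unit vectors
`u_k ∈ Z_k` with `β_k - 1/(k+1) < ‖ι u_k‖` then squeezes `β_k` to `0`.
-/

open Filter Submodule Topology
open scoped InnerProductSpace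

section

variable {𝕜 H E : Type*} [RCLike 𝕜] [NormedAddCommGroup H] [InnerProductSpace 𝕜 H]

variable (𝕜) in
def closedTailSpan (e : ℕ → H) (k : ℕ) : Submodule 𝕜 H :=
  (span 𝕜 (e '' {j | k ≤ j})).topologicalClosure

theorem mem_closedTailSpan_self (e : ℕ → H) (k : ℕ) : e k ∈ closedTailSpan 𝕜 e k :=
  le_topologicalClosure _ (subset_span ⟨k, le_refl k, rfl⟩)

theorem Orthonormal.inner_eq_zero_of_mem_closedTailSpan {e : ℕ → H} (he : Orthonormal 𝕜 e)
    {j n : ℕ} (hjn : j < n) {u : H} (hu : u ∈ closedTailSpan 𝕜 e n) : ⟪e j, u⟫_𝕜 = 0 := by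
  have hle : closedTailSpan 𝕜 e n ≤ (𝕜 ∙ e j)ᗮ := by
    refine topologicalClosure_minimal _ ?_ (isClosed_orthogonal _)
    rw [span_le]
    rintro _ ⟨i, hi, rfl⟩
    exact mem_orthogonal_singleton_iff_inner_right.2 (he.2 (hjn.trans_le hi).ne)
  exact mem_orthogonal_singleton_iff_inner_right.1 (hle hu)

theorem tendsto_inner_zero_of_tendsto_of_inner_eq_zero {α : Type*} {l : Filter α} {u w : α → H}
    {v : H} {C : ℝ} (hu : ∀ n, ‖u n‖ ≤ C) (hw : Tendsto w l (𝓝 v)) (horth : ∀ n, ⟪w n, u n⟫_𝕜 = 0) :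
    Tendsto (fun n => ⟪v, u n⟫_𝕜) l (𝓝 0) := by
  have hsub : ∀ n, ⟪v, u n⟫_𝕜 = ⟪v - w n, u n⟫_𝕜 := fun n => by
    rw [inner_sub_left, horth, sub_zero]
  have hbound : Tendsto (fun n => ‖v - w n‖ * C) l (𝓝 0) := by
    simpa using ((tendsto_const_nhds.sub hw).norm.mul_const C : Tendsto _ l (𝓝 (‖v - v‖ * C)))
  refine squeeze_zero_norm (fun n => ?_) hbound
  rw [hsub]
  exact (norm_inner_le_norm _ _).trans (mul_le_mul_of_nonneg_left (hu n) (norm_nonneg _))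

theorem HilbertBasis.tendsto_inner_of_mem_closedTailSpan (b : HilbertBasis ℕ 𝕜 H) {u : ℕ → H}
    {C : ℝ} (hC : ∀ n, ‖u n‖ ≤ C) (hu : ∀ n, u n ∈ closedTailSpan 𝕜 b n) (v : H) :
    Tendsto (fun n => ⟪v, u n⟫_𝕜) atTop (𝓝 0) :=
  tendsto_inner_zero_of_tendsto_of_inner_eq_zero hC (b.hasSum_repr v).tendsto_sum_nat fun n => by
    rw [sum_inner]
    refine Finset.sum_eq_zero fun j hj => ?_
    rw [inner_smul_left, b.orthonormal.inner_eq_zero_of_mem_closedTailSpan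
      (Finset.mem_range.1 hj) (hu n), mul_zero]

theorem IsCompactOperator.tendsto_zero_of_tendsto_inner [CompleteSpace H] [NormedAddCommGroup E]
    [NormedSpace 𝕜 E] {T : H →L[𝕜] E} (hT : IsCompactOperator T) {u : ℕ → H} {C : ℝ}
    (hC : ∀ n, ‖u n‖ ≤ C) (hweak : ∀ v, Tendsto (fun n => ⟪v, u n⟫_𝕜) atTop (𝓝 0)) :
    Tendsto (fun n => T (u n)) atTop (𝓝 0) := by
  refine tendsto_of_subseq_tendsto fun ns hns => ?_
  have hmem : ∀ n, T (u (ns n)) ∈ closure (T '' Metric.closedBall 0 C) := fun n =>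
    subset_closure ⟨u (ns n), mem_closedBall_zero_iff.2 (hC _), rfl⟩
  obtain ⟨a, -, φ, hφ, hlim⟩ := (hT.isCompact_closure_image_closedBall C).tendsto_subseq hmem
  suffices a = 0 from ⟨φ, this ▸ hlim⟩
  refine SeparatingDual.eq_zero_of_forall_dual_eq_zero (R := 𝕜) fun f => ?_
  set v := (InnerProductSpace.toDual 𝕜 H).symm (f.comp T)
  have hv : ∀ x, f (T x) = ⟪v, x⟫_𝕜 := fun x => by
    rw [InnerProductSpace.toDual_symm_apply]; rfl
  have hnull : Tendsto (fun n => f (T (u (ns (φ n))))) atTop (𝓝 0) := by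
    simp_rw [hv]
    exact (hweak v).comp (hns.comp hφ.tendsto_atTop)
  exact tendsto_nhds_unique ((f.continuous.tendsto a).comp hlim) hnull

variable {F G : Type*} [NormedAddCommGroup F] [NormedSpace 𝕜 F] [NormedAddCommGroup G]
  [NormedSpace 𝕜 G]

theorem ContinuousLinearMap.bddAbove_norm_apply_unit (T : F →L[𝕜] G) (Z : Set F) :
    BddAbove {r : ℝ | ∃ u, u ∈ Z ∧ ‖u‖ = 1 ∧ r = ‖T u‖} :=
  ⟨‖T‖, by rintro _ ⟨u, -, hu, rfl⟩; simpa [hu] using T.le_opNorm u⟩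

theorem ContinuousLinearMap.exists_unit_sSup_sub_lt_norm_apply (T : F →L[𝕜] G) {Z : Set F} {x : F}
    (hx : x ∈ Z) (hx1 : ‖x‖ = 1) {δ : ℝ} (hδ : 0 < δ) :
    ∃ u ∈ Z, ‖u‖ = 1 ∧ sSup {r : ℝ | ∃ u, u ∈ Z ∧ ‖u‖ = 1 ∧ r = ‖T u‖} - δ < ‖T u‖ := by
  set S := {r : ℝ | ∃ u, u ∈ Z ∧ ‖u‖ = 1 ∧ r = ‖T u‖}
  have hS : S.Nonempty := ⟨‖T x‖, x, hx, hx1, rfl⟩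
  obtain ⟨_, ⟨u, hu, hu1, rfl⟩, hlt⟩ := exists_lt_of_lt_csSup hS (sub_lt_self (sSup S) hδ)
  exact ⟨u, hu, hu1, hlt⟩

theorem ContinuousLinearMap.sSup_norm_apply_unit_nonneg (T : F →L[𝕜] G) {Z : Set F} {x : F}
    (hx : x ∈ Z) (hx1 : ‖x‖ = 1) :
    0 ≤ sSup {r : ℝ | ∃ u, u ∈ Z ∧ ‖u‖ = 1 ∧ r = ‖T u‖} :=
  (norm_nonneg _).trans (le_csSup (T.bddAbove_norm_apply_unit Z) ⟨x, hx, hx1, rfl⟩)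

end

/-- abstract form of Lemma 4.1: if `(e_k)` is an orthonormal Hilbert
basis of a real Hilbert space `H` and `ι : H → E` is a compact continuous linear
map, then `β_k = sup{‖ι u‖ : u ∈ Z_k, ‖u‖ = 1} → 0`, where `Z_k` is the closed
span of `{e_j : j ≥ k}`. -/
theorem stmt_13 {H E : Type*}
    [NormedAddCommGroup H] [InnerProductSpace ℝ H] [CompleteSpace H]
    [NormedAddCommGroup E] [NormedSpace ℝ E]
    (e : ℕ → H) (he : Orthonormal ℝ e)
    (hspan : (Submodule.span ℝ (Set.range e)).topologicalClosure = ⊤)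
    (ι : H →L[ℝ] E) (hcompact : IsCompactOperator ι) :
    Tendsto (fun k : ℕ =>
        sSup {r : ℝ | ∃ u : H,
          u ∈ (Submodule.span ℝ (e '' {j | k ≤ j})).topologicalClosure ∧
          ‖u‖ = 1 ∧ r = ‖ι u‖})
      atTop (nhds 0) := by
  have hek (k : ℕ) : e k ∈ closedTailSpan ℝ e k := mem_closedTailSpan_self e k
  choose u hu hu1 hsup using fun k : ℕ =>
    ι.exists_unit_sSup_sub_lt_norm_apply (hek k) (he.1 k) (Nat.one_div_pos_of_nat (n := k))
  have hweak : ∀ v, Tendsto (fun n => ⟪v, u n⟫_ℝ) atTop (𝓝 0) := by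
    refine (HilbertBasis.mk he hspan.ge).tendsto_inner_of_mem_closedTailSpan
      (fun n => (hu1 n).le) ?_
    rwa [HilbertBasis.coe_mk he hspan.ge]
  have hιu := (hcompact.tendsto_zero_of_tendsto_inner (fun n => (hu1 n).le) hweak).norm
  refine squeeze_zero (fun k => ι.sSup_norm_apply_unit_nonneg (hek k) (he.1 k))
    (fun k => (sub_lt_iff_lt_add.1 (hsup k)).le) ?_
  simpa using hιu.add tendsto_one_div_add_atTop_nhds_zero_nat
end
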